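/- arXiv:1907.04776 — 3 statements merged into one kernel-verified Lean document; each statement's English description precedes it below -/
import Mathlib

section
/- Let ν be a string-monotonic function and let G be a finite prefix-free set of finite binary strings with μ(S_G) > 0, and set i = 1 + ⌈-log₂ μ(S_G)⌉. Then there exists N' ∈ ℕ such that: (1) for all N ≥ N', 2^{-i+2} > |G^N_ν|·2^{-N} > 2^{-i}; and (2) for all N'' < N', |G^{N''}_ν|·2^{-N''} ≤ 2^{-i}. -/
open scoped Classical

/-- The first `n` bits of an infinite binary sequence, as a finite string. -/
def firstN (α : ℕ → Bool) (n : ℕ) : List Bool := List.ofFn fun i : Fin n => α i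

/-- The set of infinite binary sequences extending the finite string `x`. -/
def cylSet (x : List Bool) : Set (ℕ → Bool) := {α | ∀ i : Fin x.length, α i = x.get i}

/-- A set of finite binary strings is prefix-free if no element is a proper prefix
of another element. -/
def PrefixFree (A : Set (List Bool)) : Prop :=
  ∀ x ∈ A, ∀ y ∈ A, x <+: y → x = y

/-- A function on finite binary strings is string-monotonic if it is total computable
and monotone with respect to the prefix relation. -/
def StringMonotonic (ν : List Bool → List Bool) : Prop :=
  Computable ν ∧ ∀ x y : List Bool, ν x <+: ν (x ++ y)

/-- `S_G`: sequences α such that some prefix of α is mapped by ν to a string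
with a prefix in `G`. -/
def SG (ν : List Bool → List Bool) (G : Finset (List Bool)) : Set (ℕ → Bool) :=
  {α | ∃ n : ℕ, ∃ x ∈ G, x <+: ν (firstN α n)}

/-- `G^N_ν`: strings of length `N` whose ν-image has a prefix in `G`. -/
noncomputable def GN (ν : List Bool → List Bool) (G : Finset (List Bool)) (N : ℕ) :
    Finset (List Bool) :=
  ((Finset.univ : Finset (Fin N → Bool)).image fun f => List.ofFn f).filter
    fun y => ∃ x ∈ G, x <+: ν y

/-!
The events `SGAt ν G N` ("some `x ∈ G` is a prefix of `ν` applied to the first `N` bits") increase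
with `N`, because `ν` is prefix-monotone, and exhaust `S_G`. Each is the disjoint union of the
cylinders of the strings in `G^N_ν`, so its measure is exactly `|G^N_ν| 2^{-N}`. These masses
therefore increase to `μ(S_G)`, which lies strictly between `2^{-i}` and `2^{-i+2}` by the choice
of `i`; `N'` is the first index at which the mass exceeds `2^{-i}`.
-/

open MeasureTheory Filter Topology

lemma firstN_succ (α : ℕ → Bool) (n : ℕ) : firstN α (n + 1) = firstN α n ++ [α n] := by
  rw [firstN, List.ofFn_succ', List.concat_eq_append]
  rfl

lemma length_firstN (α : ℕ → Bool) (n : ℕ) : (firstN α n).length = n := by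
  simp [firstN]

lemma mem_cylSet_firstN (α : ℕ → Bool) (n : ℕ) : α ∈ cylSet (firstN α n) := by
  intro i
  rw [List.get_eq_getElem]
  simp [firstN]

lemma firstN_eq_of_mem_cylSet {α : ℕ → Bool} {y : List Bool} (h : α ∈ cylSet y) :
    firstN α y.length = y := by
  refine List.ext_get (length_firstN α _) fun n _ hn => ?_
  simpa [firstN] using h ⟨n, hn⟩

lemma measurableSet_cylSet (y : List Bool) : MeasurableSet (cylSet y) := by
  have : cylSet y = ⋂ i : Fin y.length, {α : ℕ → Bool | α i = y.get i} := by
    ext α; simp [cylSet]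
  rw [this]
  exact .iInter fun i => measurableSet_eq_fun (measurable_pi_apply (i : ℕ)) measurable_const

lemma mem_GN {ν : List Bool → List Bool} {G : Finset (List Bool)} {N : ℕ} {y : List Bool} :
    y ∈ GN ν G N ↔ y.length = N ∧ ∃ x ∈ G, x <+: ν y := by
  simp only [GN, Finset.mem_filter, Finset.mem_image, Finset.mem_univ, true_and]
  refine and_congr_left fun _ => ⟨?_, ?_⟩
  · rintro ⟨f, rfl⟩
    simp
  · rintro rfl
    exact ⟨fun j => y.get j, List.ofFn_get y⟩

section Approximation

variable (ν : List Bool → List Bool) (G : Finset (List Bool))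

def SGAt (N : ℕ) : Set (ℕ → Bool) :=
  {α | ∃ x ∈ G, x <+: ν (firstN α N)}

lemma iUnion_SGAt : ⋃ N, SGAt ν G N = SG ν G := by
  ext α
  simp [SGAt, SG]

variable {ν} in
lemma monotone_SGAt (hν : ∀ x y, ν x <+: ν (x ++ y)) : Monotone (SGAt ν G) := by
  refine monotone_nat_of_le_succ fun N α ⟨x, hx, hpre⟩ => ⟨x, hx, hpre.trans ?_⟩
  rw [firstN_succ]
  exact hν _ _

lemma SGAt_eq_biUnion_cylSet (N : ℕ) : SGAt ν G N = ⋃ y ∈ GN ν G N, cylSet y := by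
  ext α
  simp only [Set.mem_iUnion, exists_prop]
  constructor
  · rintro hα
    exact ⟨firstN α N, mem_GN.2 ⟨length_firstN α N, hα⟩, mem_cylSet_firstN α N⟩
  · rintro ⟨y, hy, hαy⟩
    obtain ⟨rfl, hG⟩ := mem_GN.1 hy
    rwa [SGAt, Set.mem_ofPred_eq, firstN_eq_of_mem_cylSet hαy]

lemma pairwiseDisjoint_cylSet_GN (N : ℕ) :
    (GN ν G N : Set (List Bool)).PairwiseDisjoint cylSet := by
  intro y hy z hz hne
  refine Set.disjoint_left.2 fun α hαy hαz => hne ?_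
  rw [← firstN_eq_of_mem_cylSet hαy, ← firstN_eq_of_mem_cylSet hαz,
    (mem_GN.1 hy).1, (mem_GN.1 hz).1]

variable {μ : Measure (ℕ → Bool)}

lemma measure_SGAt (hμ : ∀ x : List Bool, μ (cylSet x) = (2 : ENNReal) ^ (-(x.length : ℤ)))
    (N : ℕ) : μ (SGAt ν G N) = (GN ν G N).card * (2 : ENNReal) ^ (-(N : ℤ)) := by
  rw [SGAt_eq_biUnion_cylSet, measure_biUnion_finset (pairwiseDisjoint_cylSet_GN ν G N)
    fun y _ => measurableSet_cylSet y, Finset.card_eq_sum_ones, Nat.cast_sum, Finset.sum_mul]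
  refine Finset.sum_congr rfl fun y hy => ?_
  rw [hμ, (mem_GN.1 hy).1, Nat.cast_one, one_mul]

lemma toReal_measure_SGAt
    (hμ : ∀ x : List Bool, μ (cylSet x) = (2 : ENNReal) ^ (-(x.length : ℤ))) (N : ℕ) :
    (μ (SGAt ν G N)).toReal = (GN ν G N).card * (2 : ℝ) ^ (-(N : ℤ)) := by
  rw [measure_SGAt ν G hμ, ENNReal.toReal_mul, ENNReal.zpow_neg, ENNReal.toReal_inv,
    zpow_neg]
  simp

variable {ν} [IsFiniteMeasure μ] (hν : ∀ x y, ν x <+: ν (x ++ y))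
include hν

lemma monotone_toReal_measure_SGAt : Monotone fun N => (μ (SGAt ν G N)).toReal :=
  fun _ _ h => ENNReal.toReal_mono (measure_ne_top μ _) (measure_mono (monotone_SGAt G hν h))

lemma tendsto_toReal_measure_SGAt :
    Tendsto (fun N => (μ (SGAt ν G N)).toReal) atTop (𝓝 (μ (SG ν G)).toReal) := by
  rw [← iUnion_SGAt]
  exact (ENNReal.tendsto_toReal (measure_ne_top μ _)).comp
    (tendsto_measure_iUnion_atTop (monotone_SGAt G hν))

end Approximation

lemma Monotone.exists_first_lt {a : ℕ → ℝ} (ha : Monotone a) {c : ℝ} (h : ∃ N, c < a N) :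
    ∃ N', (∀ N, N' ≤ N → c < a N) ∧ ∀ N, N < N' → a N ≤ c :=
  ⟨Nat.find h, fun _ hN => (Nat.find_spec h).trans_le (ha hN),
    fun _ hN => le_of_not_gt (Nat.find_min h hN)⟩

lemma two_zpow_bounds_of_eq_one_add_ceil {r : ℝ} (hr : 0 < r) {i : ℤ}
    (hi : i = 1 + ⌈-Real.logb 2 r⌉) : (2 : ℝ) ^ (-i) < r ∧ r < (2 : ℝ) ^ (-i + 2) := by
  set L := Real.logb 2 r
  have h2L : (2 : ℝ) ^ L = r := Real.rpow_logb (by norm_num) (by norm_num) hr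
  have hceil := Int.le_ceil (-L)
  have hceil' := Int.ceil_lt_add_one (-L)
  constructor
  · calc (2 : ℝ) ^ (-i) = (2 : ℝ) ^ ((-i : ℤ) : ℝ) := (Real.rpow_intCast 2 (-i)).symm
      _ ≤ (2 : ℝ) ^ (L - 1) :=
        Real.rpow_le_rpow_of_exponent_le one_le_two (by push_cast [hi]; linarith)
      _ = r / 2 := by rw [Real.rpow_sub two_pos, h2L, Real.rpow_one]
      _ < r := half_lt_self hr
  · calc r = (2 : ℝ) ^ L := h2L.symm
      _ < (2 : ℝ) ^ ((-i + 2 : ℤ) : ℝ) :=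
        Real.rpow_lt_rpow_of_exponent_lt one_lt_two (by push_cast [hi]; linarith)
      _ = (2 : ℝ) ^ (-i + 2) := Real.rpow_intCast 2 (-i + 2)

theorem stmt_0_general
    (μ : MeasureTheory.Measure (ℕ → Bool)) [MeasureTheory.IsProbabilityMeasure μ]
    (hμ : ∀ x : List Bool, μ (cylSet x) = (2 : ENNReal) ^ (-(x.length : ℤ)))
    (ν : List Bool → List Bool) (hν : StringMonotonic ν)
    (G : Finset (List Bool))
    (hpos : 0 < μ (SG ν G))
    (i : ℤ) (hi : i = 1 + ⌈-Real.logb 2 ((μ (SG ν G)).toReal)⌉) :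
    ∃ N' : ℕ,
      (∀ N : ℕ, N' ≤ N →
        ((GN ν G N).card : ℝ) * (2 : ℝ) ^ (-(N : ℤ)) < (2 : ℝ) ^ (-i + 2) ∧
        (2 : ℝ) ^ (-i) < ((GN ν G N).card : ℝ) * (2 : ℝ) ^ (-(N : ℤ))) ∧
      (∀ N'' : ℕ, N'' < N' →
        ((GN ν G N'').card : ℝ) * (2 : ℝ) ^ (-(N'' : ℤ)) ≤ (2 : ℝ) ^ (-i)) := by
  have hr : 0 < (μ (SG ν G)).toReal := ENNReal.toReal_pos hpos.ne' (measure_ne_top μ _)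
  obtain ⟨hlow, hupp⟩ := two_zpow_bounds_of_eq_one_add_ceil hr hi
  have hmass_le (N : ℕ) : (μ (SGAt ν G N)).toReal ≤ (μ (SG ν G)).toReal :=
    ENNReal.toReal_mono (measure_ne_top μ _)
      (measure_mono (iUnion_SGAt ν G ▸ Set.subset_iUnion (SGAt ν G) N))
  obtain ⟨N', hge, hlt⟩ := (monotone_toReal_measure_SGAt G hν.2).exists_first_lt
    ((tendsto_toReal_measure_SGAt G hν.2).eventually_const_lt hlow).exists
  simp only [toReal_measure_SGAt ν G hμ] at hge hlt hmass_le
  exact ⟨N', fun N hN => ⟨(hmass_le N).trans_lt hupp, hge N hN⟩, hlt⟩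

theorem stmt_0
    (μ : MeasureTheory.Measure (ℕ → Bool)) [MeasureTheory.IsProbabilityMeasure μ]
    (hμ : ∀ x : List Bool, μ (cylSet x) = (2 : ENNReal) ^ (-(x.length : ℤ)))
    (ν : List Bool → List Bool) (hν : StringMonotonic ν)
    (G : Finset (List Bool)) (hG : PrefixFree (↑G : Set (List Bool)))
    (hpos : 0 < μ (SG ν G))
    (i : ℤ) (hi : i = 1 + ⌈-Real.logb 2 ((μ (SG ν G)).toReal)⌉) :
    ∃ N' : ℕ,
      (∀ N : ℕ, N' ≤ N →
        ((GN ν G N).card : ℝ) * (2 : ℝ) ^ (-(N : ℤ)) < (2 : ℝ) ^ (-i + 2) ∧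
        (2 : ℝ) ^ (-i) < ((GN ν G N).card : ℝ) * (2 : ℝ) ^ (-(N : ℤ))) ∧
      (∀ N'' : ℕ, N'' < N' →
        ((GN ν G N'').card : ℝ) * (2 : ℝ) ^ (-(N'' : ℤ)) ≤ (2 : ℝ) ^ (-i)) :=
  stmt_0_general μ hμ ν hν G hpos i hi
end

section
/- Let m : PMF ℕ, let δ be a real number with 0 < δ ≤ 1, and let Q : PMF (Finset ℕ) have finite support and satisfy m(D) ≥ δ for every D in the support of Q. Then for every k ∈ ℕ there exists a tuple z : Fin k → ℕ such that Σ{Q(D) : D in the support of Q with D ∩ range(z) = ∅} ≤ (1 − δ)^k. -/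
/-!
Choose the points one at a time. If the sets missed so far carry `Q`-mass `M`, then a fresh point
`x ∼ m` lies outside a given set `D` of the support with probability `m(Dᶜ) ≤ 1 - δ`, so on average
the sets still missed after adding `x` carry mass at most `(1 - δ) M`, and some `x` does at least as
well as the average.
-/

open scoped Classical ENNReal

namespace PMF

variable {α : Type*}

theorem exists_le_tsum_mul (p : PMF α) (f : α → ℝ≥0∞) : ∃ x, f x ≤ ∑' x, p x * f x := by
  by_contra! hlt
  obtain ⟨x₀, hx₀⟩ := p.support_nonempty
  have hmean : ∑' x, p x * ∑' y, p y * f y = ∑' y, p y * f y := by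
    rw [ENNReal.tsum_mul_right, p.tsum_coe, one_mul]
  have hlt' : ∑' x, p x * ∑' y, p y * f y < ∑' y, p y * f y :=
    ENNReal.tsum_lt_tsum (i := x₀) (by rw [hmean]; exact (hlt x₀).ne_top)
      (fun x => mul_le_mul_right (hlt x).le _)
      ((ENNReal.mul_lt_mul_iff_right hx₀ (p.apply_ne_top x₀)).2 (hlt x₀))
  exact hlt'.ne hmean

theorem toOuterMeasure_apply_compl (p : PMF α) (s : Set α) :
    p.toOuterMeasure sᶜ = 1 - p.toOuterMeasure s := by
  rw [toOuterMeasure_apply, toOuterMeasure_apply]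
  refine ENNReal.eq_sub_of_add_eq (p.tsum_coe_indicator_ne_top s) ?_
  rw [← ENNReal.tsum_add, ← p.tsum_coe]
  exact tsum_congr fun x => congrFun (Set.indicator_compl_add_self s p) x

end PMF

section MissMass

variable {α : Type*}

noncomputable def missMass (Q : PMF (Finset α)) (S : Set α) : ℝ≥0∞ :=
  ∑' D : Finset α, if Disjoint (D : Set α) S then Q D else 0

theorem missMass_le_one (Q : PMF (Finset α)) (S : Set α) : missMass Q S ≤ 1 :=
  (ENNReal.tsum_le_tsum fun D => by split_ifs <;> simp).trans_eq Q.tsum_coe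

theorem tsum_mul_missMass_insert (m : PMF α) (Q : PMF (Finset α)) (S : Set α) :
    ∑' x, m x * missMass Q (insert x S) =
      ∑' D : Finset α, (if Disjoint (D : Set α) S then Q D else 0) * m.toOuterMeasure (↑D)ᶜ := by
  simp_rw [missMass, Set.disjoint_insert_right, ← ENNReal.tsum_mul_left]
  rw [ENNReal.tsum_comm]
  refine tsum_congr fun D => ?_
  rw [PMF.toOuterMeasure_apply, ← ENNReal.tsum_mul_left]
  refine tsum_congr fun x => ?_
  by_cases hx : x ∈ D <;> by_cases hS : Disjoint (D : Set α) S <;> simp [hx, hS, mul_comm]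

variable {m : PMF α} {Q : PMF (Finset α)} {ε : ℝ≥0∞}

theorem exists_missMass_insert_le (hQ : ∀ D ∈ Q.support, m.toOuterMeasure (↑D)ᶜ ≤ ε)
    (S : Set α) : ∃ x, missMass Q (insert x S) ≤ ε * missMass Q S := by
  obtain ⟨x, hx⟩ := m.exists_le_tsum_mul fun x => missMass Q (insert x S)
  refine ⟨x, hx.trans ?_⟩
  rw [tsum_mul_missMass_insert, missMass, ← ENNReal.tsum_mul_left]
  refine ENNReal.tsum_le_tsum fun D => ?_
  by_cases hD : D ∈ Q.support
  · rw [mul_comm]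
    exact mul_le_mul_left (hQ D hD) _
  · simp [(Q.apply_eq_zero_iff D).2 hD]

theorem exists_missMass_range_le (hQ : ∀ D ∈ Q.support, m.toOuterMeasure (↑D)ᶜ ≤ ε) :
    ∀ k : ℕ, ∃ z : Fin k → α, missMass Q (Set.range z) ≤ ε ^ k
  | 0 => ⟨Fin.elim0, by simpa using missMass_le_one Q _⟩
  | k + 1 => by
    obtain ⟨z, hz⟩ := exists_missMass_range_le hQ k
    obtain ⟨x, hx⟩ := exists_missMass_insert_le hQ (Set.range z)
    refine ⟨Fin.cons x z, ?_⟩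
    rw [Fin.range_cons, pow_succ']
    exact hx.trans (mul_le_mul_right hz ε)

end MissMass

theorem stmt_6_general
    (m : PMF ℕ) (δ : ℝ) (hδ0 : 0 < δ) (hδ1 : δ ≤ 1)
    (Q : PMF (Finset ℕ))
    (hheavy : ∀ D ∈ Q.support, ENNReal.ofReal δ ≤ ∑ x ∈ D, m x) :
    ∀ k : ℕ, ∃ z : Fin k → ℕ,
      (∑' D : Finset ℕ, if (↑D : Set ℕ) ∩ Set.range z = ∅ then Q D else 0) ≤
        ENNReal.ofReal ((1 - δ) ^ k) := by
  have hcompl : ∀ D ∈ Q.support, m.toOuterMeasure (↑D)ᶜ ≤ ENNReal.ofReal (1 - δ) := by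
    intro D hD
    rw [m.toOuterMeasure_apply_compl, PMF.toOuterMeasure_apply_finset,
      ENNReal.ofReal_sub _ hδ0.le, ENNReal.ofReal_one]
    exact tsub_le_tsub_left (hheavy D hD) 1
  intro k
  obtain ⟨z, hz⟩ := exists_missMass_range_le hcompl k
  refine ⟨z, ?_⟩
  rw [ENNReal.ofReal_pow (by linarith)]
  simpa only [missMass, Set.disjoint_iff_inter_eq_empty] using hz

theorem stmt_6
    (m : PMF ℕ) (δ : ℝ) (hδ0 : 0 < δ) (hδ1 : δ ≤ 1)
    (Q : PMF (Finset ℕ)) (hQfin : Q.support.Finite)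
    (hheavy : ∀ D ∈ Q.support, ENNReal.ofReal δ ≤ ∑ x ∈ D, m x) :
    ∀ k : ℕ, ∃ z : Fin k → ℕ,
      (∑' D : Finset ℕ, if (↑D : Set ℕ) ∩ Set.range z = ∅ then Q D else 0) ≤
        ENNReal.ofReal ((1 - δ) ^ k) :=
  stmt_6_general m δ hδ0 hδ1 Q hheavy
end

section
/- Let m : PMF ℕ, let δ be a real number with 0 < δ ≤ 1, and let Q : PMF (Finset ℕ) have finite support and satisfy m(D) ≥ δ for every D in the support of Q. Then for every k ∈ ℕ there exists a tuple z : Fin k → ℕ such that every D in the support of Q with Q(D) > (1 − δ)^k satisfies D ∩ range(z) ≠ ∅. -/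
/-!
Derandomized probabilistic method. Since every set in the support of `Q` has `m`-mass at least
`δ`, averaging over `x ∼ m` shows that some point lies in sets carrying at least a `δ`-fraction of
the `Q`-mass of any given family. Choosing the points of `z` greedily, the `Q`-mass of the sets
missed by `z` therefore shrinks by a factor `1 - δ` per point, so after `k` points no missed set
can have `Q`-mass above `(1 - δ) ^ k`.
-/

open MeasureTheory ENNReal

namespace PMF

variable {α : Type*}

theorem toOuterMeasure_inter_add_diff (p : PMF α) (s t : Set α) :
    p.toOuterMeasure (s ∩ t) + p.toOuterMeasure (s \ t) = p.toOuterMeasure s := by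
  have ht : MeasurableSet[p.toOuterMeasure.caratheodory] t := by
    rw [toOuterMeasure_caratheodory]; exact MeasurableSpace.measurableSet_top
  exact ((OuterMeasure.isCaratheodory_iff _).1 ht s).symm

theorem toOuterMeasure_le_one (p : PMF α) (s : Set α) : p.toOuterMeasure s ≤ 1 :=
  (p.toOuterMeasure.mono (Set.subset_univ s)).trans
    ((p.toOuterMeasure_apply_eq_one_iff _).2 (Set.subset_univ _)).le

theorem toOuterMeasure_apply_ne_top (p : PMF α) (s : Set α) : p.toOuterMeasure s ≠ ∞ :=
  ne_top_of_le_ne_top one_ne_top (p.toOuterMeasure_le_one s)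

theorem exists_le_of_le_tsum_mul (p : PMF α) {f : α → ℝ≥0∞} {c : ℝ≥0∞}
    (hf : ∑' x, p x * f x ≠ ∞) (hc : c ≤ ∑' x, p x * f x) : ∃ x, c ≤ f x := by
  by_contra! hlt
  obtain ⟨x, hx⟩ := p.support_nonempty
  have : ∑' x, p x * f x < ∑' x, p x * c :=
    ENNReal.tsum_lt_tsum hf (fun y => by gcongr; exact (hlt y).le)
      (ENNReal.mul_lt_mul_right hx (p.apply_ne_top x) (hlt x))
  rw [ENNReal.tsum_mul_right, p.tsum_coe, one_mul] at this
  exact this.not_ge hc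

theorem tsum_mul_toOuterMeasure_mem (m : PMF α) (Q : PMF (Finset α)) (E : Set (Finset α)) :
    ∑' x, m x * Q.toOuterMeasure (E ∩ {D | x ∈ D}) = ∑' D, E.indicator Q D * ∑ x ∈ D, m x := by
  have hterm : ∀ x D, m x * (E ∩ {D | x ∈ D}).indicator Q D =
      E.indicator Q D * (D : Set α).indicator m x := by
    intro x D
    by_cases hD : D ∈ E <;> by_cases hx : x ∈ D <;> simp [hD, hx, mul_comm]
  simp_rw [toOuterMeasure_apply, ← ENNReal.tsum_mul_left, hterm]
  rw [ENNReal.tsum_comm]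
  simp_rw [ENNReal.tsum_mul_left, ← toOuterMeasure_apply, toOuterMeasure_apply_finset]

theorem exists_le_toOuterMeasure_mem (m : PMF α) (Q : PMF (Finset α)) {ε : ℝ≥0∞}
    (hheavy : ∀ D ∈ Q.support, ε ≤ ∑ x ∈ D, m x) (E : Set (Finset α)) :
    ∃ x, ε * Q.toOuterMeasure E ≤ Q.toOuterMeasure (E ∩ {D | x ∈ D}) := by
  refine m.exists_le_of_le_tsum_mul (ne_top_of_le_ne_top one_ne_top ?_) ?_
  · calc ∑' x, m x * Q.toOuterMeasure (E ∩ {D | x ∈ D}) ≤ ∑' x, m x * 1 :=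
          ENNReal.tsum_le_tsum fun x => by gcongr; exact Q.toOuterMeasure_le_one _
      _ = 1 := by rw [ENNReal.tsum_mul_right, m.tsum_coe, one_mul]
  · rw [tsum_mul_toOuterMeasure_mem, toOuterMeasure_apply, ← ENNReal.tsum_mul_left]
    refine ENNReal.tsum_le_tsum fun D => ?_
    by_cases hD : Q D = 0
    · simp [Set.indicator_apply_eq_zero.2 fun _ => hD]
    · rw [mul_comm]
      gcongr
      exact hheavy D hD

theorem exists_toOuterMeasure_disjoint_range_le (m : PMF α) (Q : PMF (Finset α)) {ε : ℝ≥0∞}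
    (hheavy : ∀ D ∈ Q.support, ε ≤ ∑ x ∈ D, m x) (k : ℕ) :
    ∃ z : Fin k → α,
      Q.toOuterMeasure {D | Disjoint (D : Set α) (Set.range z)} ≤ (1 - ε) ^ k := by
  induction k with
  | zero => exact ⟨Fin.elim0, by simpa using Q.toOuterMeasure_le_one _⟩
  | succ k ih =>
    obtain ⟨z, hz⟩ := ih
    set E := {D : Finset α | Disjoint (D : Set α) (Set.range z)}
    obtain ⟨x, hx⟩ := exists_le_toOuterMeasure_mem m Q hheavy E
    refine ⟨Fin.snoc z x, ?_⟩
    have hsnoc : {D : Finset α | Disjoint (D : Set α) (Set.range (Fin.snoc z x))} =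
        E \ {D | x ∈ D} := by
      ext D
      simp [E, Fin.range_snoc, Set.disjoint_insert_right, and_comm]
    have hsplit := Q.toOuterMeasure_inter_add_diff E {D | x ∈ D}
    rw [hsnoc, ENNReal.eq_sub_of_add_eq' (Q.toOuterMeasure_apply_ne_top E)
      ((add_comm _ _).trans hsplit)]
    calc Q.toOuterMeasure E - Q.toOuterMeasure (E ∩ {D | x ∈ D})
        ≤ Q.toOuterMeasure E - ε * Q.toOuterMeasure E := tsub_le_tsub_left hx _
      _ = (1 - ε) * Q.toOuterMeasure E := by
        rw [ENNReal.sub_mul fun _ _ => Q.toOuterMeasure_apply_ne_top E, one_mul]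
      _ ≤ (1 - ε) * (1 - ε) ^ k := by gcongr
      _ = (1 - ε) ^ (k + 1) := (pow_succ' _ _).symm

end PMF

theorem stmt_7_general
    (m : PMF ℕ) (δ : ℝ) (hδ0 : 0 < δ) (hδ1 : δ ≤ 1)
    (Q : PMF (Finset ℕ))
    (hheavy : ∀ D ∈ Q.support, ENNReal.ofReal δ ≤ ∑ x ∈ D, m x) :
    ∀ k : ℕ, ∃ z : Fin k → ℕ,
      ∀ D ∈ Q.support, ENNReal.ofReal ((1 - δ) ^ k) < Q D →
        ((↑D : Set ℕ) ∩ Set.range z).Nonempty := by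
  intro k
  obtain ⟨z, hz⟩ := PMF.exists_toOuterMeasure_disjoint_range_le m Q hheavy k
  refine ⟨z, fun D _ hQD => Set.not_disjoint_iff_nonempty_inter.1 fun hD => ?_⟩
  have hQD_le : Q D ≤ Q.toOuterMeasure {D | Disjoint (D : Set ℕ) (Set.range z)} := by
    rw [← Q.toOuterMeasure_apply_singleton]
    exact Q.toOuterMeasure.mono (Set.singleton_subset_iff.2 hD)
  rw [ENNReal.ofReal_pow (sub_nonneg.2 hδ1), ENNReal.ofReal_sub _ hδ0.le,
    ENNReal.ofReal_one] at hQD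
  exact (hQD_le.trans hz).not_gt hQD

theorem stmt_7
    (m : PMF ℕ) (δ : ℝ) (hδ0 : 0 < δ) (hδ1 : δ ≤ 1)
    (Q : PMF (Finset ℕ)) (hQfin : Q.support.Finite)
    (hheavy : ∀ D ∈ Q.support, ENNReal.ofReal δ ≤ ∑ x ∈ D, m x) :
    ∀ k : ℕ, ∃ z : Fin k → ℕ,
      ∀ D ∈ Q.support, ENNReal.ofReal ((1 - δ) ^ k) < Q D →
        ((↑D : Set ℕ) ∩ Set.range z).Nonempty :=
  stmt_7_general m δ hδ0 hδ1 Q hheavy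
end
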